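/- arXiv:2406.07468 — 2 statements merged into one kernel-verified Lean document; each statement's English description precedes it below -/
import Mathlib

section
/- Let n ≥ 4 be even, q = 2^n, α ∈ 𝔽_q^*, and let ω be a fixed element of 𝔽_4 \ 𝔽_2 regarded as an element of 𝔽_q. Let k = |R-Spec_q(F_{0,α})| and s = |{a ∈ 𝔽_q \ {0, α, αω, αω²} : Tr(α/(a+α)) = Tr(α/a) = 0}|. Then APN-def(F_{0,α}) = 9q + 8s − 9k − 9 when n ≡ 2 (mod 4), and APN-def(F_{0,α}) = 9q + 8s − 9k + 5 when n ≡ 0 (mod 4). -/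
namespace APNPaper

open Finset

variable {F : Type*} [Field F] [Fintype F] [DecidableEq F]

/-- `δ_G(a,b)`: the number of `x` with `D_aG(x) = G(x) + G(x+a) = b`. -/
def delta (G : F → F) (a b : F) : ℕ :=
  (Finset.univ.filter fun x : F => G x + G (x + a) = b).card

/-- `∇_G(a,x) = δ_G(a, D_aG(x))`. -/
def nabla (G : F → F) (a x : F) : ℕ := delta G a (G x + G (x + a))

/-- `G` is almost perfect nonlinear. -/
def IsAPN (G : F → F) : Prop := ∀ a : F, a ≠ 0 → ∀ b : F, delta G a b ≤ 2

/-- The derivative `D_aG` is 2-to-1, i.e. `G` satisfies property `(p_a)`. -/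
def TwoToOne (G : F → F) (a : F) : Prop :=
  ∀ b : F, delta G a b = 0 ∨ delta G a b = 2

instance instDecTwoToOne (G : F → F) (a : F) : Decidable (TwoToOne G a) := by
  unfold TwoToOne; infer_instance

/-- The row spectrum `R-Spec_q(G)`. -/
def RSpec (G : F → F) : Finset F :=
  (Finset.univ.erase (0 : F)).filter fun a => TwoToOne G a

/-- `S_a = {x : ∇_G(a,x) = 2}`. -/
def Sset (G : F → F) (a : F) : Finset F :=
  Finset.univ.filter fun x : F => nabla G a x = 2

/-- `w_{S_a^c} = Σ_{b : δ_G(a,b) > 2} (δ_G(a,b)/2)²`. -/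
def wS (G : F → F) (a : F) : ℤ :=
  ∑ b : F, if 2 < delta G a b then ((delta G a b / 2 : ℕ) : ℤ) ^ 2 else 0

/-- `χ_a = 1` if `S_a = 𝔽_q`, and `0` otherwise. -/
def chi (G : F → F) (a : F) : ℤ :=
  if Sset G a = Finset.univ then 1 else 0

/-- `𝒟(G) = Σ_{a ≠ 0} (|S_a| − w_{S_a^c} + χ_a)`. -/
def Dscr (G : F → F) : ℤ :=
  ∑ a ∈ Finset.univ.erase (0 : F), (((Sset G a).card : ℤ) - wS G a + chi G a)

/-- The APN-defect `APN-def(G) = q² − 1 − 𝒟(G)`. -/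
def APNdef (G : F → F) : ℤ := (Fintype.card F : ℤ) ^ 2 - 1 - Dscr G

/-- The differential uniformity `δ_G`. -/
def diffUnif (G : F → F) : ℕ :=
  ((Finset.univ.erase (0 : F)) ×ˢ Finset.univ).sup fun p => delta G p.1 p.2

/-- The set of vanishing flats of `G`. -/
def VF (G : F → F) : Set (Finset F) :=
  {S | ∃ x y z : F, x ≠ y ∧ x ≠ z ∧ y ≠ z ∧
    G x + G y + G z + G (x + y + z) = 0 ∧ S = ({x, y, z, x + y + z} : Finset F)}

/-- The absolute trace `Tr(z) = z + z² + ⋯ + z^{2^{n-1}}` (with values in `{0,1} ⊆ F`). -/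
def Tr (n : ℕ) (z : F) : F := ∑ i ∈ Finset.range n, z ^ (2 ^ i)

/-- The modification `F_{0,α}` of the inverse function: the values of the inverse
function at `0` and `α` are swapped. -/
def Fmod (α : F) : F → F :=
  fun x => if x = 0 then α⁻¹ else if x = α then 0 else x⁻¹

end APNPaper

/-!
In characteristic 2 every `δ_G(a, b)` is even (`x` and `x + a` lie in the same fibre), so a row
`a ≠ 0` contributes `q + χ_a - Σ_{δ_G(a,b) > 2} (δ + (δ/2)²)` to `𝒟(G)`, and `χ_a = 1` exactly on
the 2-to-1 rows; hence `APN-def(G) = q - 1 - |R-Spec(G)| + Σ_{a ≠ 0} rowExcess G a`.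

`F_{0,α}` agrees with the inverse function off `{0, α}`, whose derivative counts are
`2[b = a⁻¹] + 2[b ≠ 0 ∧ Tr((ab)⁻¹) = 0]` (Artin–Schreier: `x² + x = d` has two roots iff
`Tr d = 0`). After correcting on `{0, a, α, α + a}`, only `b = α⁻¹ + a⁻¹` and `b = (α + a)⁻¹` can
have `δ > 2`: the row `α` has a single 4; the rows `αω, αω²`, where these two values coincide,
have a single `4 + 2[Tr ω = 0]`; every other row has a 4 at each of the two values whose trace
condition holds, and is 2-to-1 when neither holds. Summing and using `Tr ω = 0 ↔ 4 ∣ n` gives the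
formula.
-/

namespace APNPaper

open Finset

section Trace

variable {K : Type*} [Field K] {n : ℕ}

theorem tr_add [CharP K 2] (x y : K) : Tr n (x + y) = Tr n x + Tr n y := by
  simp only [Tr, add_pow_char_pow, sum_add_distrib]

theorem tr_one [CharP K 2] (hn : Even n) : Tr n (1 : K) = 0 := by
  simp [Tr, CharTwo.natCast_eq_ite, hn]

theorem tr_two_mul_of_sq_eq_add_one [CharP K 2] {ω : K} (hω : ω ^ 2 = ω + 1) (m : ℕ) :
    Tr (2 * m) ω = m := by
  have h2 : (2 : K) = 0 := CharTwo.two_eq_zero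
  have hω4 : ∀ j : ℕ, ω ^ 2 ^ (2 * j) = ω := by
    intro j
    induction j with
    | zero => simp
    | succ j ih =>
      rw [Nat.mul_succ, pow_add, pow_mul, ih]
      linear_combination (ω ^ 2 + ω + 2) * hω + (ω + 1) * h2
  induction m with
  | zero => simp [Tr]
  | succ m ih =>
    rw [Nat.mul_succ, Tr, sum_range_succ, sum_range_succ, ← Tr, ih, pow_succ 2 (2 * m),
      pow_mul ω, hω4, hω]
    push_cast
    linear_combination ω * h2

theorem tr_eq_zero_iff_of_sq_eq_add_one [CharP K 2] {ω : K} (hω : ω ^ 2 = ω + 1)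
    (hn : Even n) : Tr n ω = 0 ↔ n % 4 = 0 := by
  obtain ⟨m, rfl⟩ := hn
  rw [← two_mul, tr_two_mul_of_sq_eq_add_one hω, CharP.cast_eq_zero_iff K 2]
  omega

theorem tr_sq [Fintype K] (hcard : Fintype.card K = 2 ^ n) (x : K) : Tr n (x ^ 2) = Tr n x := by
  have hx : x ^ 2 ^ n = x := hcard ▸ FiniteField.pow_card x
  have hshift := sum_range_succ' (fun i => x ^ 2 ^ i) n
  rw [sum_range_succ, hx, pow_zero, pow_one] at hshift
  simp only [Tr, ← pow_mul, ← pow_succ']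
  exact add_right_cancel hshift.symm

theorem tr_sq_add_self [CharP K 2] [Fintype K] (hcard : Fintype.card K = 2 ^ n) (x : K) :
    Tr n (x ^ 2 + x) = 0 := by
  rw [tr_add, tr_sq hcard, CharTwo.add_self_eq_zero]

open Polynomial in
theorem two_mul_card_filter_tr_eq_zero_le [Fintype K] [DecidableEq K]
    (hcard : Fintype.card K = 2 ^ n) : 2 * #{z : K | Tr n z = 0} ≤ Fintype.card K := by
  have hn : n ≠ 0 := by
    rintro rfl
    have := Fintype.one_lt_card (α := K)
    omega
  -- The kernel of `Tr` is contained in the root set of `P`, of degree `2 ^ (n - 1)`.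
  set P : K[X] := ∑ i ∈ range n, X ^ 2 ^ i
  have hcoeff : P.coeff (2 ^ (n - 1)) = 1 := by
    simp [P, coeff_X_pow, (Nat.pow_right_injective le_rfl).eq_iff, hn]
  have hP : P ≠ 0 := fun h => by simp [h] at hcoeff
  have hdeg : P.natDegree ≤ 2 ^ (n - 1) := natDegree_sum_le_of_forall_le _ _ fun i hi => by
    rw [natDegree_X_pow]
    exact Nat.pow_le_pow_right two_pos (by grind)
  have hroots : #{z : K | Tr n z = 0} ≤ P.natDegree :=
    card_le_degree_of_subset_roots fun z hz => by
      rw [mem_roots hP]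
      simpa [P, Tr, eval_finsetSum] using (mem_filter.1 hz).2
  calc 2 * #{z : K | Tr n z = 0} ≤ 2 * 2 ^ (n - 1) := by omega
    _ = Fintype.card K := by rw [hcard, ← pow_succ', Nat.sub_add_cancel (Nat.pos_of_ne_zero hn)]

theorem filter_sq_add_self_eq [CharP K 2] [Fintype K] [DecidableEq K] (x₀ : K) :
    ({x | x ^ 2 + x = x₀ ^ 2 + x₀} : Finset K) = {x₀, x₀ + 1} := by
  have h2 : (2 : K) = 0 := CharTwo.two_eq_zero
  ext x
  simp only [mem_filter, mem_univ, true_and, mem_insert, mem_singleton]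
  constructor
  · intro h
    have : (x + x₀) * (x + (x₀ + 1)) = 0 := by
      linear_combination h + (x * x₀ + x₀ ^ 2 + x₀) * h2
    rcases mul_eq_zero.1 this with h | h
    · exact Or.inl (CharTwo.add_eq_zero.1 h)
    · exact Or.inr (CharTwo.add_eq_zero.1 h)
  · rintro (rfl | rfl)
    · rfl
    · linear_combination (x₀ + 1) * h2

theorem exists_sq_add_self_eq_of_tr_eq_zero [CharP K 2] [Fintype K] [DecidableEq K]
    (hcard : Fintype.card K = 2 ^ n) {d : K} (hd : Tr n d = 0) : ∃ x, x ^ 2 + x = d := by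
  set S := (univ : Finset K).image fun x => x ^ 2 + x
  have hfiber : ∀ c ∈ S, #{x | x ^ 2 + x = c} = 2 := by
    intro c hc
    obtain ⟨x₀, -, rfl⟩ := mem_image.1 hc
    rw [filter_sq_add_self_eq, card_pair (by simp)]
  have hcard_image : Fintype.card K = 2 * #S := by
    rw [← card_univ, card_eq_sum_card_image (fun x : K => x ^ 2 + x) univ, sum_congr rfl hfiber,
      sum_const, smul_eq_mul, mul_comm]
  have hsub : S ⊆ ({z | Tr n z = 0} : Finset K) := by
    intro c hc
    obtain ⟨x, -, rfl⟩ := mem_image.1 hc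
    simpa using tr_sq_add_self hcard x
  have heq := eq_of_subset_of_card_le hsub (by
    have := two_mul_card_filter_tr_eq_zero_le hcard
    omega)
  have hdS : d ∈ S := heq ▸ mem_filter.2 ⟨mem_univ d, hd⟩
  simpa [S] using hdS

theorem card_filter_sq_add_self_eq [CharP K 2] [Fintype K] [DecidableEq K]
    (hcard : Fintype.card K = 2 ^ n) (d : K) :
    #{x : K | x ^ 2 + x = d} = if Tr n d = 0 then 2 else 0 := by
  split_ifs with hd
  · obtain ⟨x₀, rfl⟩ := exists_sq_add_self_eq_of_tr_eq_zero hcard hd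
    rw [filter_sq_add_self_eq, card_pair (by simp)]
  · rw [card_eq_zero, filter_eq_empty_iff]
    rintro x - rfl
    exact hd (tr_sq_add_self hcard x)

end Trace

section Derivative

variable {F : Type*} [Field F] [Fintype F] [DecidableEq F]

theorem sum_delta (G : F → F) (a : F) : ∑ b, delta G a b = Fintype.card F :=
  (card_eq_sum_card_fiberwise fun x _ => mem_univ (G x + G (x + a))).symm

theorem card_sset (G : F → F) (a : F) :
    #(Sset G a) = ∑ b, if delta G a b = 2 then 2 else 0 := by
  rw [card_eq_sum_card_fiberwise fun x _ => mem_univ (G x + G (x + a))]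
  refine sum_congr rfl fun b _ => ?_
  rw [Sset, filter_filter]
  split_ifs with hb
  · refine (congrArg card (filter_congr fun x _ => ?_)).trans hb
    simp only [nabla, and_iff_right_iff_imp]
    rintro rfl
    exact hb
  · rw [card_eq_zero, filter_eq_empty_iff]
    rintro x - ⟨hx, rfl⟩
    exact hb hx

theorem sset_eq_univ_iff (G : F → F) (a : F) : Sset G a = univ ↔ TwoToOne G a := by
  simp only [eq_univ_iff_forall, Sset, mem_filter, mem_univ, true_and]
  constructor
  · intro h b
    rcases eq_or_ne (delta G a b) 0 with hb | hb
    · exact Or.inl hb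
    · obtain ⟨x, hx⟩ := card_pos.1 (Nat.pos_of_ne_zero hb)
      rw [← (mem_filter.1 hx).2]
      exact Or.inr (h x)
  · intro h x
    refine (h (G x + G (x + a))).resolve_left fun h0 => ?_
    rw [delta, card_eq_zero, filter_eq_empty_iff] at h0
    exact h0 (mem_univ x) rfl

theorem chi_eq_ite (G : F → F) (a : F) : chi G a = if TwoToOne G a then 1 else 0 := by
  simp only [chi, sset_eq_univ_iff]

theorem delta_sub_delta_eq_sum (G H : F → F) {a : F} (T : Finset F)
    (hT : ∀ x ∉ T, G x + G (x + a) = H x + H (x + a)) (b : F) :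
    (delta G a b : ℤ) - delta H a b =
      ∑ x ∈ T, ((if G x + G (x + a) = b then 1 else 0) - if H x + H (x + a) = b then 1 else 0) := by
  simp only [delta, card_filter]
  push_cast
  rw [← sum_sub_distrib]
  exact (sum_subset (subset_univ T) fun x _ hx => by rw [hT x hx, sub_self]).symm

theorem even_delta [CharP F 2] (G : F → F) {a : F} (ha : a ≠ 0) (b : F) :
    Even (delta G a b) := by
  -- `x ↦ x + a` is a fixed-point-free involution of the fibre, so its size vanishes in `ZMod 2`.
  rw [← ZMod.natCast_eq_zero_iff_even, delta, card_eq_sum_ones, Nat.cast_sum, Nat.cast_one]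
  refine sum_involution (fun x _ => x + a) (fun _ _ => by decide) (fun x _ _ => by simpa using ha)
    (fun x hx => ?_) (fun x _ => by rw [add_assoc, CharTwo.add_self_eq_zero, add_zero])
  simp only [mem_filter, mem_univ, true_and] at hx ⊢
  rw [add_assoc, CharTwo.add_self_eq_zero, add_zero, add_comm, hx]

/-- A value `b` with `δ_G(a,b) = d > 2` costs `d + (d/2)²` in `𝒟(G)`: its `d` preimages leave
`S_a`, and `(d/2)²` enters `w_{S_a^c}`. -/
def excessTerm (d : ℕ) : ℤ := if 2 < d then d + ((d / 2 : ℕ) : ℤ) ^ 2 else 0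

def rowExcess (G : F → F) (a : F) : ℤ := ∑ b, excessTerm (delta G a b)

theorem excessTerm_nonneg (d : ℕ) : 0 ≤ excessTerm d := by
  unfold excessTerm
  split_ifs <;> positivity

theorem excessTerm_eq_zero_iff {d : ℕ} : excessTerm d = 0 ↔ d ≤ 2 := by
  unfold excessTerm
  split_ifs with hd
  · constructor
    · intro h
      nlinarith [sq_nonneg ((d / 2 : ℕ) : ℤ)]
    · omega
  · simp only [true_iff]
    omega

theorem rowExcess_eq_sum {G : F → F} {a : F} (E : Finset F) (hE : ∀ b ∉ E, delta G a b ≤ 2) :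
    rowExcess G a = ∑ b ∈ E, excessTerm (delta G a b) :=
  (sum_subset (subset_univ E) fun b _ hb => excessTerm_eq_zero_iff.2 (hE b hb)).symm

theorem twoToOne_iff_rowExcess_eq_zero [CharP F 2] (G : F → F) {a : F} (ha : a ≠ 0) :
    TwoToOne G a ↔ rowExcess G a = 0 := by
  rw [rowExcess, sum_eq_zero_iff_of_nonneg fun b _ => excessTerm_nonneg _]
  refine forall_congr' fun b => ?_
  obtain ⟨k, hk⟩ := even_delta G ha b
  simp only [mem_univ, true_implies, excessTerm_eq_zero_iff]
  omega

theorem card_sset_sub_wS_add_chi [CharP F 2] (G : F → F) {a : F} (ha : a ≠ 0) :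
    (#(Sset G a) : ℤ) - wS G a + chi G a =
      Fintype.card F - rowExcess G a + if TwoToOne G a then 1 else 0 := by
  rw [chi_eq_ite, card_sset, ← sum_delta G a, wS, rowExcess]
  have hterm : ∀ b, ((if delta G a b = 2 then 2 else 0 : ℕ) : ℤ) -
      (if 2 < delta G a b then ((delta G a b / 2 : ℕ) : ℤ) ^ 2 else 0) =
      delta G a b - excessTerm (delta G a b) := fun b => by
    obtain ⟨k, hk⟩ := even_delta G ha b
    unfold excessTerm
    split_ifs <;> push_cast <;> omega
  have hsum := sum_congr rfl fun b (_ : b ∈ univ) => hterm b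
  rw [sum_sub_distrib, sum_sub_distrib] at hsum
  push_cast at hsum ⊢
  linarith

theorem apndef_eq_sum_rowExcess [CharP F 2] (G : F → F) :
    APNdef G = Fintype.card F - 1 - #(RSpec G) + ∑ a ∈ univ.erase 0, rowExcess G a := by
  have hDscr : Dscr G = ∑ a ∈ univ.erase 0,
      ((Fintype.card F : ℤ) - rowExcess G a + if TwoToOne G a then 1 else 0) :=
    sum_congr rfl fun a ha => card_sset_sub_wS_add_chi G (ne_of_mem_erase ha)
  rw [APNdef, hDscr, sum_add_distrib, sum_sub_distrib, sum_const, sum_boole,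
    card_erase_of_mem (mem_univ _), card_univ, nsmul_eq_mul, Nat.cast_pred Fintype.card_pos, RSpec]
  ring

end Derivative

section Inverse

variable {F : Type*} [Field F] [CharP F 2] {n : ℕ}

theorem inv_add_inv_add_eq_iff {a b x : F} (ha : a ≠ 0) (hb : b ≠ 0) (hx : x ≠ 0)
    (hxa : x ≠ a) : x⁻¹ + (x + a)⁻¹ = b ↔ (x / a) ^ 2 + x / a = (a * b)⁻¹ := by
  have hxa' : x + a ≠ 0 := fun h => hxa (CharTwo.add_eq_zero.1 h)
  have h2 : (2 : F) = 0 := CharTwo.two_eq_zero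
  field_simp
  constructor <;> intro h
  · linear_combination h + (x * a * b + x ^ 2 * b - x - a) * h2
  · linear_combination h + (x + a - x * a * b - x ^ 2 * b) * h2

theorem inv_add_inv_eq_inv_add_iff {α a ω : F} (hω : ω ^ 2 = ω + 1) (hα : α ≠ 0) (ha : a ≠ 0)
    (haα : a ≠ α) : α⁻¹ + a⁻¹ = (α + a)⁻¹ ↔ a = α * ω ∨ a = α * ω ^ 2 := by
  have hαa : α + a ≠ 0 := fun h => haα (CharTwo.add_eq_zero.1 h).symm
  have h2 : (2 : F) = 0 := CharTwo.two_eq_zero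
  have hfactor : α⁻¹ + a⁻¹ - (α + a)⁻¹ = (a + α * ω) * (a + α * ω ^ 2) / (α * a * (α + a)) := by
    field_simp
    linear_combination -(a * α + α ^ 2 * ω + α ^ 2) * hω - (α ^ 2 * ω + a * α * ω) * h2
  rw [← sub_eq_zero, hfactor, div_eq_zero_iff, or_iff_left (by simp [hα, ha, hαa]), mul_eq_zero,
    CharTwo.add_eq_zero, CharTwo.add_eq_zero]

variable [Fintype F] [DecidableEq F]

theorem card_filter_inv_add_inv_eq (hcard : Fintype.card F = 2 ^ n) {a : F} (ha : a ≠ 0)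
    (b : F) : #{x ∈ ({0, a} : Finset F)ᶜ | x⁻¹ + (x + a)⁻¹ = b} =
      if b ≠ 0 ∧ Tr n (a * b)⁻¹ = 0 then 2 else 0 := by
  rcases eq_or_ne b 0 with rfl | hb
  · rw [if_neg fun h => h.1 rfl, card_eq_zero, filter_eq_empty_iff]
    intro x _ h
    rw [CharTwo.add_eq_zero, inv_inj] at h
    exact ha (by simpa using h.symm)
  have hab : (a * b)⁻¹ ≠ 0 := inv_ne_zero (mul_ne_zero ha hb)
  simp only [ne_eq, hb, not_false_eq_true, true_and]
  rw [← card_filter_sq_add_self_eq hcard]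
  refine card_nbij' (· / a) (a * ·) (fun x hx => ?_) (fun y hy => ?_) (fun x _ => ?_)
    (fun y _ => ?_)
  · simp only [coe_filter, mem_compl, mem_insert, mem_singleton, not_or, mem_univ, true_and,
      Set.mem_ofPred_eq] at hx ⊢
    exact (inv_add_inv_add_eq_iff ha hb hx.1.1 hx.1.2).1 hx.2
  · simp only [coe_filter, mem_compl, mem_insert, mem_singleton, not_or, mem_univ, true_and,
      Set.mem_ofPred_eq] at hy ⊢
    have hy0 : a * y ≠ 0 := mul_ne_zero ha fun h => hab (by rw [← hy, h]; ring)
    have hy1 : a * y ≠ a := fun h => hab <| by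
      rw [← hy, mul_eq_left₀ ha |>.1 h, one_pow, CharTwo.add_self_eq_zero]
    refine ⟨⟨hy0, hy1⟩, ?_⟩
    rwa [inv_add_inv_add_eq_iff ha hb hy0 hy1, mul_div_cancel_left₀ y ha]
  · exact mul_div_cancel₀ x ha
  · exact mul_div_cancel_left₀ y ha

theorem delta_inv (hcard : Fintype.card F = 2 ^ n) {a : F} (ha : a ≠ 0) (b : F) :
    delta (·⁻¹) a b = (if b = a⁻¹ then 2 else 0) + if b ≠ 0 ∧ Tr n (a * b)⁻¹ = 0 then 2 else 0 := by
  rw [delta, card_filter, ← sum_add_sum_compl {0, a}, sum_pair ha.symm, ← card_filter,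
    card_filter_inv_add_inv_eq hcard ha]
  simp only [inv_zero, zero_add, CharTwo.add_self_eq_zero, add_zero, eq_comm (a := a⁻¹)]
  split_ifs <;> rfl

end Inverse

section ModifiedInverse

variable {F : Type*} [Field F] [Fintype F] [DecidableEq F] [CharP F 2] {n : ℕ} {α a : F}

theorem delta_fmod_self (hα : α ≠ 0) : delta (Fmod α) α = delta (·⁻¹) α := by
  have hD : ∀ x, Fmod α x + Fmod α (x + α) = x⁻¹ + (x + α)⁻¹ := by
    intro x
    rcases eq_or_ne x 0 with rfl | hx0
    · simp [Fmod, hα]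
    rcases eq_or_ne x α with rfl | hxα
    · simp [Fmod, hα, CharTwo.add_self_eq_zero]
    have h1 : x + α ≠ 0 := fun h => hxα (CharTwo.add_eq_zero.1 h)
    have h2 : x + α ≠ α := by simpa using hx0
    simp [Fmod, hx0, hxα, h1, h2]
  funext b
  simp only [delta, hD]

theorem delta_fmod (hcard : Fintype.card F = 2 ^ n) (hα : α ≠ 0) (ha : a ≠ 0) (haα : a ≠ α)
    (b : F) : (delta (Fmod α) a b : ℤ) =
      (if b = α⁻¹ + a⁻¹ then 2 else 0) + (if b = (α + a)⁻¹ then 2 else 0) -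
        (if b = α⁻¹ + (α + a)⁻¹ then 2 else 0) + if b ≠ 0 ∧ Tr n (a * b)⁻¹ = 0 then 2 else 0 := by
  have hαa : α + a ≠ 0 := fun h => haα (CharTwo.add_eq_zero.1 h).symm
  have hαaα : α + a ≠ α := by simpa using ha
  have hαaa : α + a ≠ a := by simpa using hα
  -- Only the `x` with `x` or `x + a` in `{0, α}` see the modification.
  have hT := delta_sub_delta_eq_sum (Fmod α) (·⁻¹) (a := a) {0, a, α, α + a} (fun x hx => by
    simp only [mem_insert, mem_singleton, not_or] at hx
    obtain ⟨hx0, hxa, hxα, hxαa⟩ := hx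
    have h1 : x + a ≠ 0 := fun h => hxa (CharTwo.add_eq_zero.1 h)
    have h2 : x + a ≠ α := fun h => hxαa <| by
      rw [← h, add_assoc, CharTwo.add_self_eq_zero, add_zero]
    simp [Fmod, hx0, hxα, h1, h2]) b
  rw [sum_insert (by simp [ha.symm, hα.symm, hαa.symm]), sum_insert (by simp [haα, hαaa.symm]),
    sum_insert (by simp [hαaα.symm]), sum_singleton, delta_inv hcard ha] at hT
  simp only [ne_eq, mul_inv_rev, Nat.cast_add, Nat.cast_ite, Nat.cast_ofNat, CharP.cast_eq_zero,
    Fmod, ↓reduceIte, zero_add, ha, haα, inv_zero, CharTwo.add_self_eq_zero, add_zero, hα, hαa,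
    hαaα, add_assoc] at hT
  rw [add_comm a⁻¹ α⁻¹, add_comm (α + a)⁻¹ α⁻¹] at hT
  simp only [eq_comm (b := b)] at hT
  rw [mul_inv_rev]
  split_ifs at hT ⊢ <;> omega

theorem delta_fmod_le_two (hcard : Fintype.card F = 2 ^ n) (hα : α ≠ 0) (ha : a ≠ 0)
    (haα : a ≠ α) {b : F} (hb₁ : b ≠ α⁻¹ + a⁻¹) (hb₂ : b ≠ (α + a)⁻¹) :
    delta (Fmod α) a b ≤ 2 := by
  have h := delta_fmod hcard hα ha haα b
  rw [if_neg hb₁, if_neg hb₂] at h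
  split_ifs at h <;> omega

theorem delta_fmod_inv_add_inv (hcard : Fintype.card F = 2 ^ n) (hα : α ≠ 0) (ha : a ≠ 0)
    (haα : a ≠ α) (hne : α⁻¹ + a⁻¹ ≠ (α + a)⁻¹) :
    delta (Fmod α) a (α⁻¹ + a⁻¹) = 2 + if Tr n (α / (a + α)) = 0 then 2 else 0 := by
  have hαa : a + α ≠ 0 := fun h => haα (CharTwo.add_eq_zero.1 h)
  have h₀ : α⁻¹ + a⁻¹ ≠ 0 := fun h => haα (inv_injective (CharTwo.add_eq_zero.1 h)).symm
  have h₃ : α⁻¹ + a⁻¹ ≠ α⁻¹ + (α + a)⁻¹ := by simpa using (show a ≠ α + a by simpa using hα)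
  have hTr : (a * (α⁻¹ + a⁻¹))⁻¹ = α / (a + α) := by field_simp
  have h := delta_fmod hcard hα ha haα (α⁻¹ + a⁻¹)
  rw [if_pos rfl, if_neg hne, if_neg h₃, hTr] at h
  simp only [ne_eq, h₀, not_false_eq_true, true_and] at h
  split_ifs at h ⊢ <;> omega

theorem delta_fmod_inv_add (hcard : Fintype.card F = 2 ^ n) (heven : Even n) (hα : α ≠ 0)
    (ha : a ≠ 0) (haα : a ≠ α) :
    delta (Fmod α) a (α + a)⁻¹ =
      (if α⁻¹ + a⁻¹ = (α + a)⁻¹ then 4 else 2) + if Tr n (α / a) = 0 then 2 else 0 := by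
  have hαa : α + a ≠ 0 := fun h => haα (CharTwo.add_eq_zero.1 h).symm
  have h₃ : (α + a)⁻¹ ≠ α⁻¹ + (α + a)⁻¹ := by simpa using hα
  have hTr : Tr n (a * (α + a)⁻¹)⁻¹ = Tr n (α / a) := by
    rw [show (a * (α + a)⁻¹)⁻¹ = α / a + 1 by field_simp, tr_add, tr_one heven, add_zero]
  have h := delta_fmod hcard hα ha haα (α + a)⁻¹
  rw [if_pos rfl, if_neg h₃, hTr] at h
  simp only [ne_eq, inv_eq_zero, hαa, not_false_eq_true, true_and,
    eq_comm (a := (α + a)⁻¹) (b := α⁻¹ + a⁻¹)] at h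
  split_ifs at h ⊢ <;> omega

theorem rowExcess_fmod_self (hcard : Fintype.card F = 2 ^ n) (heven : Even n) (hα : α ≠ 0) :
    rowExcess (Fmod α) α = 8 := by
  rw [rowExcess_eq_sum {α⁻¹} fun b hb => ?_, sum_singleton, delta_fmod_self hα,
    delta_inv hcard hα]
  · rw [if_pos rfl, if_pos ⟨inv_ne_zero hα, by rw [mul_inv_cancel₀ hα, inv_one, tr_one heven]⟩]
    norm_num [excessTerm]
  · rw [delta_fmod_self hα, delta_inv hcard hα, if_neg (by simpa using hb)]
    split_ifs <;> omega

theorem rowExcess_fmod_of_eq (hcard : Fintype.card F = 2 ^ n) (heven : Even n) (hα : α ≠ 0)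
    (ha : a ≠ 0) (haα : a ≠ α) (h : α⁻¹ + a⁻¹ = (α + a)⁻¹) :
    rowExcess (Fmod α) a = if Tr n (α / a) = 0 then 15 else 8 := by
  rw [rowExcess_eq_sum {(α + a)⁻¹} fun b hb => ?_, sum_singleton,
    delta_fmod_inv_add hcard heven hα ha haα, if_pos h]
  · split_ifs <;> norm_num [excessTerm]
  · rw [mem_singleton] at hb
    exact delta_fmod_le_two hcard hα ha haα (h ▸ hb) hb

theorem rowExcess_fmod_of_ne (hcard : Fintype.card F = 2 ^ n) (heven : Even n) (hα : α ≠ 0)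
    (ha : a ≠ 0) (haα : a ≠ α) (h : α⁻¹ + a⁻¹ ≠ (α + a)⁻¹) :
    rowExcess (Fmod α) a =
      (if Tr n (α / (a + α)) = 0 then 8 else 0) + if Tr n (α / a) = 0 then 8 else 0 := by
  rw [rowExcess_eq_sum {α⁻¹ + a⁻¹, (α + a)⁻¹} fun b hb => ?_, sum_pair h,
    delta_fmod_inv_add_inv hcard hα ha haα h, delta_fmod_inv_add hcard heven hα ha haα, if_neg h]
  · split_ifs <;> norm_num [excessTerm]
  · simp only [mem_insert, mem_singleton, not_or] at hb
    exact delta_fmod_le_two hcard hα ha haα hb.1 hb.2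

theorem rowExcess_fmod (hcard : Fintype.card F = 2 ^ n) (heven : Even n) (hα : α ≠ 0) {ω : F}
    (hω : ω ^ 2 = ω + 1) (ha : a ≠ 0) :
    rowExcess (Fmod α) a =
      8 - (if TwoToOne (Fmod α) a then 8 else 0) +
        (if a ≠ 0 ∧ a ≠ α ∧ a ≠ α * ω ∧ a ≠ α * ω ^ 2 ∧
          Tr n (α / (a + α)) = 0 ∧ Tr n (α / a) = 0 then 8 else 0) +
        (if a = α * ω then if Tr n ω = 0 then 7 else 0 else 0) +
        (if a = α * ω ^ 2 then if Tr n ω = 0 then 7 else 0 else 0) := by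
  have h2 : (2 : F) = 0 := CharTwo.two_eq_zero
  have hω0 : ω ≠ 0 := by
    rintro rfl
    simp at hω
  have hω3 : ω ^ 3 = 1 := by linear_combination (ω + 1) * hω + ω * h2
  have hω1 : ω ≠ 1 := by
    rintro rfl
    exact one_ne_zero (by linear_combination -hω : (1 : F) = 0)
  have hω21 : ω ^ 2 ≠ 1 := by simpa [hω] using hω0
  have hωω2 : α * ω ≠ α * ω ^ 2 := fun h =>
    one_ne_zero (by linear_combination -hω - mul_left_cancel₀ hα h : (1 : F) = 0)
  simp only [twoToOne_iff_rowExcess_eq_zero _ ha]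
  rcases eq_or_ne a α with rfl | haα
  · rw [rowExcess_fmod_self hcard heven hα]
    simp [hα, hω1, hω21]
  by_cases h : α⁻¹ + a⁻¹ = (α + a)⁻¹
  · rw [rowExcess_fmod_of_eq hcard heven hα ha haα h]
    rcases (inv_add_inv_eq_inv_add_iff hω hα ha haα).1 h with rfl | rfl
    · have hTr : α / (α * ω) = ω ^ 2 := by
        field_simp
        linear_combination -hω3
      rw [hTr, tr_sq hcard]
      by_cases hω' : Tr n ω = 0 <;> simp [hω', hωω2]
    · have hTr : α / (α * ω ^ 2) = ω := by
        field_simp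
        linear_combination -hω3
      rw [hTr]
      by_cases hω' : Tr n ω = 0 <;> simp [hω', hωω2.symm]
  · obtain ⟨h₁, h₂⟩ := not_or.1 (mt (inv_add_inv_eq_inv_add_iff hω hα ha haα).2 h)
    rw [rowExcess_fmod_of_ne hcard heven hα ha haα h]
    by_cases h₃ : Tr n (α / (a + α)) = 0 <;> by_cases h₄ : Tr n (α / a) = 0 <;>
      simp [ha, haα, h₁, h₂, h₃, h₄]

end ModifiedInverse

variable {F : Type*} [Field F] [Fintype F] [DecidableEq F]

theorem sum_rowExcess_fmod [CharP F 2] {n : ℕ} (hcard : Fintype.card F = 2 ^ n) (heven : Even n)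
    {α ω : F} (hα : α ≠ 0) (hω : ω ^ 2 = ω + 1) :
    ∑ a ∈ univ.erase 0, rowExcess (Fmod α) a =
      8 * ((Fintype.card F : ℤ) - 1) - 8 * #(RSpec (Fmod α)) +
        8 * #{a : F | a ≠ 0 ∧ a ≠ α ∧ a ≠ α * ω ∧ a ≠ α * ω ^ 2 ∧
          Tr n (α / (a + α)) = 0 ∧ Tr n (α / a) = 0} +
        if Tr n ω = 0 then 14 else 0 := by
  have hω0 : ω ≠ 0 := by
    rintro rfl
    simp at hω
  rw [sum_congr rfl fun a ha => rowExcess_fmod hcard heven hα hω (ne_of_mem_erase ha),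
    sum_add_distrib, sum_add_distrib, sum_add_distrib, sum_sub_distrib, sum_const, ← sum_filter,
    sum_erase, ← sum_filter, sum_ite_eq', sum_ite_eq', sum_const, sum_const,
    card_erase_of_mem (mem_univ _), card_univ]
  · simp only [nsmul_eq_mul, Nat.cast_pred Fintype.card_pos, mem_erase, ne_eq, mul_eq_zero, hα,
      hω0, pow_eq_zero_iff, OfNat.ofNat_ne_zero, not_false_eq_true, or_self, mem_univ, and_self,
      if_true]
    split_ifs <;> simp only [RSpec] <;> ring
  · simp

theorem stmt_13_general (n : ℕ) (heven : Even n)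
    [CharP F 2] (hcard : Fintype.card F = 2 ^ n)
    (α : F) (hα : α ≠ 0) (ω : F) (hω : ω ^ 2 = ω + 1) (k s : ℕ)
    (hk : k = (RSpec (Fmod α)).card)
    (hs : s = ((Finset.univ.filter fun a : F =>
      a ≠ 0 ∧ a ≠ α ∧ a ≠ α * ω ∧ a ≠ α * ω ^ 2 ∧
        Tr n (α / (a + α)) = 0 ∧ Tr n (α / a) = 0)).card) :
    (n % 4 = 2 →
      APNdef (Fmod α) = 9 * (2 : ℤ) ^ n + 8 * (s : ℤ) - 9 * (k : ℤ) - 9) ∧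
    (n % 4 = 0 →
      APNdef (Fmod α) = 9 * (2 : ℤ) ^ n + 8 * (s : ℤ) - 9 * (k : ℤ) + 5) := by
  have hdef : APNdef (Fmod α) =
      9 * (2 : ℤ) ^ n + 8 * s - 9 * k - 9 + if Tr n ω = 0 then 14 else 0 := by
    rw [apndef_eq_sum_rowExcess, sum_rowExcess_fmod hcard heven hα hω, hk, hs, hcard]
    push_cast
    ring
  have hTr : Tr n ω = 0 ↔ n % 4 = 0 := tr_eq_zero_iff_of_sq_eq_add_one hω heven
  refine ⟨fun h => ?_, fun h => ?_⟩
  · rw [hdef, if_neg (by rw [hTr]; omega)]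
    ring
  · rw [hdef, if_pos (hTr.2 h)]
    ring

/-- the APN-defect of `F_{0,α}` for even `n ≥ 4`. -/
theorem stmt_13 (n : ℕ) (hn : 4 ≤ n) (heven : Even n)
    [CharP F 2] (hcard : Fintype.card F = 2 ^ n)
    (α : F) (hα : α ≠ 0) (ω : F) (hω : ω ^ 2 = ω + 1) (k s : ℕ)
    (hk : k = (RSpec (Fmod α)).card)
    (hs : s = ((Finset.univ.filter fun a : F =>
      a ≠ 0 ∧ a ≠ α ∧ a ≠ α * ω ∧ a ≠ α * ω ^ 2 ∧
        Tr n (α / (a + α)) = 0 ∧ Tr n (α / a) = 0)).card) :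
    (n % 4 = 2 →
      APNdef (Fmod α) = 9 * (2 : ℤ) ^ n + 8 * (s : ℤ) - 9 * (k : ℤ) - 9) ∧
    (n % 4 = 0 →
      APNdef (Fmod α) = 9 * (2 : ℤ) ^ n + 8 * (s : ℤ) - 9 * (k : ℤ) + 5) :=
  stmt_13_general n heven hcard α hα ω hω k s hk hs

end APNPaper
end

section
/- Let q = 2^n and let G : 𝔽_q → 𝔽_q be a power function G(x) = x^d that is a permutation of 𝔽_q with differential uniformity δ_G ≥ 4. If G is locally-APN (i.e., δ_G(1,b) ≤ 2 for all b ∈ 𝔽_q \ 𝔽_2), then G is not 0-pAPN; that is, there exists a ∈ 𝔽_q^* with δ_G(a, D_aG(0)) ≥ 4. -/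
namespace APNPaper

open Finset

variable {F : Type*} [Field F] [Fintype F] [DecidableEq F]

/-! For a power map `x ↦ x ^ d`, scaling `x ↦ a * x` gives `δ(a, b) = δ(1, b / a ^ d)`, so the
differential uniformity is attained in direction `1`. In characteristic 2 an injective `G` has
`δ(1, 0) = 0`, and local APN-ness bounds `δ(1, b)` for `b ∉ {0, 1}`; hence `δ(1, 1) ≥ 4`, and
`1 = D₁G(0)`. -/

theorem delta_pow_eq_delta_one_div {d : ℕ} {a : F} (ha : a ≠ 0) (b : F) :
    delta (fun x : F => x ^ d) a b = delta (fun x : F => x ^ d) 1 (b / a ^ d) := by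
  have hscale : ∀ x : F, (a * x) ^ d + (a * x + a) ^ d = a ^ d * (x ^ d + (x + 1) ^ d) := by
    intro x; rw [← mul_add_one, mul_pow, mul_pow, mul_add]
  refine card_nbij' (a⁻¹ * ·) (a * ·) ?_ ?_ ?_ ?_
  · intro x hx
    simp only [coe_filter, mem_univ, true_and, Set.mem_ofPred_eq] at hx ⊢
    rw [eq_div_iff (pow_ne_zero d ha), mul_comm, ← hscale, mul_inv_cancel_left₀ ha, hx]
  · intro y hy
    simp only [coe_filter, mem_univ, true_and, Set.mem_ofPred_eq] at hy ⊢
    rw [hscale, hy, mul_div_cancel₀ _ (pow_ne_zero d ha)]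
  · intro x _; simp [ha]
  · intro y _; simp [ha]

theorem delta_zero_eq_zero [CharP F 2] {G : F → F} (hG : Function.Injective G) {a : F}
    (ha : a ≠ 0) : delta G a 0 = 0 := by
  refine card_eq_zero.2 (filter_eq_empty_iff.2 fun x _ hx => ha ?_)
  simpa using hG (CharTwo.add_eq_zero.1 hx)

theorem exists_le_delta_of_le_diffUnif {G : F → F} {k : ℕ} (hk : 0 < k) (h : k ≤ diffUnif G) :
    ∃ a ≠ 0, ∃ b, k ≤ delta G a b := by
  obtain ⟨⟨a, b⟩, hab, hk⟩ := (Finset.le_sup_iff hk).1 h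
  exact ⟨a, (mem_erase.1 (mem_product.1 hab).1).1, b, hk⟩

theorem ne_zero_of_injective_pow {M : Type*} [Monoid M] [Nontrivial M] {d : ℕ}
    (h : Function.Injective fun x : M => x ^ d) : d ≠ 0 := by
  rintro rfl
  obtain ⟨x, y, hxy⟩ := exists_pair_ne M
  exact hxy (h (by simp))

theorem stmt_19_general (d : ℕ)
    [CharP F 2]
    (G : F → F) (hG : ∀ x : F, G x = x ^ d)
    (hperm : Function.Bijective G)
    (hdu : 4 ≤ diffUnif G)
    (hloc : ∀ b : F, b ≠ 0 → b ≠ 1 → delta G 1 b ≤ 2) :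
    ∃ a : F, a ≠ 0 ∧ 4 ≤ delta G a (G 0 + G (0 + a)) := by
  obtain rfl : G = fun x => x ^ d := funext hG
  obtain ⟨a, ha, b, hab⟩ := exists_le_delta_of_le_diffUnif (by norm_num) hdu
  rw [delta_pow_eq_delta_one_div ha] at hab
  have hc0 : b / a ^ d ≠ 0 := fun h => by
    rw [h, delta_zero_eq_zero hperm.1 one_ne_zero] at hab
    omega
  have hc1 : b / a ^ d = 1 := by
    by_contra h
    have := hloc _ hc0 h
    omega
  refine ⟨1, one_ne_zero, ?_⟩
  rw [hc1] at hab
  simpa [ne_zero_of_injective_pow hperm.1] using hab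

/-- a locally-APN power permutation with differential uniformity
at least 4 is not `0`-pAPN. -/
theorem stmt_19 (n d : ℕ) (hn : 0 < n)
    [CharP F 2] (hcard : Fintype.card F = 2 ^ n)
    (G : F → F) (hG : ∀ x : F, G x = x ^ d)
    (hperm : Function.Bijective G)
    (hdu : 4 ≤ diffUnif G)
    (hloc : ∀ b : F, b ≠ 0 → b ≠ 1 → delta G 1 b ≤ 2) :
    ∃ a : F, a ≠ 0 ∧ 4 ≤ delta G a (G 0 + G (0 + a)) :=
  stmt_19_general d G hG hperm hdu hloc

end APNPaper
end
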